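/- Let D be an acyclic orientation of the whole graph G (a choice 𝔼(D) ⊆ 𝔼 of exactly one orientation of each edge, containing no oriented cycle). Then the set F_D := ∩_{β ∈ 𝒰_D} F_β consists of a single point ν^D, this point ν^D is a vertex (0-dimensional face) of the Voronoi cell Vor_F(O), and it satisfies φ(ν^D) = D, i.e., 𝔼(D) = ∪ of supp⁺(β) over all bond elements β with {ν^D} ⊆ F_β. Moreover, every vertex of Vor_F(O) is of the form ν^D for some acyclic orientation D of G. -/

import Mathlib

open Finset
open scoped Classical

structure Multigraph (V E : Type) where
  tail : E → V
  head : E → V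
  loopless : ∀ e, tail e ≠ head e

namespace Multigraph

variable {V E : Type}

/-- The simple graph of adjacency underlying a multigraph. -/
def adjG (G : Multigraph V E) : SimpleGraph V :=
  SimpleGraph.fromRel (fun u v => ∃ e, G.tail e = u ∧ G.head e = v)

/-- A multigraph is connected if its adjacency graph is. -/
def Conn (G : Multigraph V E) : Prop := G.adjG.Connected

/-- Tail of an oriented edge `(e, b)`. -/
def otail (G : Multigraph V E) (oe : E × Bool) : V :=
  if oe.2 then G.tail oe.1 else G.head oe.1

/-- Head of an oriented edge `(e, b)`. -/
def ohead (G : Multigraph V E) (oe : E × Bool) : V :=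
  if oe.2 then G.head oe.1 else G.tail oe.1

/-- The coboundary map `d : C⁰(G,A) → C¹(G,A)`, where `C¹(G,A)` is identified with
`E → A` via a fixed reference orientation of each edge. -/
def dm (G : Multigraph V E) {A : Type} [Ring A] (f : V → A) : E → A :=
  fun e => f (G.head e) - f (G.tail e)

end Multigraph

/-- Value of an element of `C¹(G,A)` on an oriented edge. -/
def oval {E A : Type} [Neg A] (g : E → A) (oe : E × Bool) : A :=
  if oe.2 then g oe.1 else -g oe.1

variable {V E : Type} [Fintype V] [Fintype E] [DecidableEq V] [DecidableEq E]

/-- The cut space `F_ℝ = d(C⁰(G,ℝ)) ⊆ C¹(G,ℝ)`. -/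
def FR (G : Multigraph V E) : Set (E → ℝ) := Set.range (G.dm (A := ℝ))

/-- The cut lattice `F_ℤ`, viewed inside `C¹(G,ℝ)`. -/
def FZr (G : Multigraph V E) : Set (E → ℝ) :=
  {g | ∃ f : V → ℤ, g = G.dm fun v => (f v : ℝ)}

/-- The Euclidean norm on `C¹(G,ℝ)`. -/
noncomputable def enorm (x : E → ℝ) : ℝ := Real.sqrt (∑ e, x e ^ 2)

/-- The Voronoi cell of `β ∈ F_ℤ` inside `F_ℝ`. -/
noncomputable def VorF (G : Multigraph V E) (β : E → ℝ) : Set (E → ℝ) :=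
  {x | x ∈ FR G ∧ ∀ α ∈ FZr G, _root_.enorm (x - β) ≤ _root_.enorm (x - α)}

/-- The number of connected components of the induced subgraph `G[C]`. -/
noncomputable def ncomp (G : Multigraph V E) (C : Set V) : ℕ :=
  Nat.card (G.adjG.induce C).ConnectedComponent

/-- `β` is a bond element of `F_ℤ` (viewed in `C¹(G,ℝ)`): `β = d(χ_C)` for `C ⊆ V`
such that the ordered partition `(V − C, C)` is a bond. -/
def IsBondElt (G : Multigraph V E) (β : E → ℝ) : Prop :=
  ∃ C : Set V, C.Nonempty ∧ Cᶜ.Nonempty ∧ ncomp G Cᶜ + ncomp G C - 1 = 1 ∧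
    β = G.dm fun v => if v ∈ C then (1 : ℝ) else 0

/-- The positive support of `x ∈ C¹(G,ℝ)`. -/
def suppPos (x : E → ℝ) : Set (E × Bool) := {oe | 0 < oval x oe}

/-- `D` is an acyclic orientation of the whole graph `G`: exactly one orientation of
each edge is chosen, and there is no oriented cycle. -/
def IsAcyclicOrientation (G : Multigraph V E) (D : Set (E × Bool)) : Prop :=
  (∀ e : E, ((e, true) ∈ D ↔ (e, false) ∉ D)) ∧
  ¬ ∃ (l : ℕ) (vs : Fin l → V) (es : Fin l → E × Bool), 0 < l ∧
      Function.Injective vs ∧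
      ∀ i : Fin l, es i ∈ D ∧ G.otail (es i) = vs i ∧
        G.ohead (es i) = vs ⟨((i : ℕ) + 1) % l, Nat.mod_lt _ i.pos⟩

/-- The affine hyperplane `F_β = {x ∈ F_ℝ | 2⟨x, β⟩ = ‖β‖²}` associated with a bond
element `β`. -/
def Fhyp (G : Multigraph V E) (β : E → ℝ) : Set (E → ℝ) :=
  {x | x ∈ FR G ∧ 2 * (∑ e : E, x e * β e) = ∑ e : E, β e ^ 2}

/-- `F_D = ⋂_{β ∈ 𝒰_D} F_β`, intersection over the bond elements `β` with
`supp⁺(β) ⊆ 𝔼(D)`. -/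
def FD (G : Multigraph V E) (D : Set (E × Bool)) : Set (E → ℝ) :=
  {x | x ∈ FR G ∧ ∀ β : E → ℝ, IsBondElt G β → suppPos β ⊆ D → x ∈ Fhyp G β}

/-!
For an acyclic orientation `D`, let `𝟙_D = ±1` according to `D` and let `ν^D` be the orthogonal
projection of `𝟙_D / 2` to `F_ℝ`. For a cut `β = d(χ_C)` one has `⟨𝟙_D, β⟩ ≤ ‖β‖²`, with equality
iff `supp⁺(β) ⊆ 𝔼(D)`; so `ν^D` satisfies every bond inequality `2⟨x, β⟩ ≤ ‖β‖²` and is tight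
exactly on `𝒰_D`. These inequalities already cut out `Vor_F(O)`: every `α ∈ F_ℤ` is the sum of
the cuts of its upper level sets, and every cut is a sum of bond elements of the same signs
(split along the components of `G[A]`, then along those of their complements).
The point `ν^D` is the only point of `F_D`, because the cut of an up-set of `D` is such a sum
of elements of `𝒰_D` and `χ_v = χ_{R(v)} - χ_{R(v) ∖ v}` for the set `R(v)` reachable from `v`.

Conversely, at an exposed point `ν` of `Vor_F(O)` the tight bond elements span `F_ℝ`. By strict
submodularity of `C ↦ ‖d(χ_C)‖²` no two of them orient an edge in opposite directions, so their
positive supports form an orientation `D`; it is acyclic because each of its edges is increased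
by a potential that increases along `D` only, and then `ν = ν^D`.
-/

section Polyhedron

variable {W ι : Type*} [TopologicalSpace W]

/-- Exposed by the sum of the `f i`, `i ∈ s`. -/
theorem isExposed_setOf_forall_eq [AddCommMonoid W] [Module ℝ W] (P : Set W) (s : Finset ι)
    (f : ι → StrongDual ℝ W) (b : ι → ℝ) (hP : ∀ x ∈ P, ∀ i ∈ s, f i x ≤ b i) :
    IsExposed ℝ P {x ∈ P | ∀ i ∈ s, f i x = b i} := by
  rintro ⟨x₀, hx₀P, hx₀⟩
  refine ⟨∑ i ∈ s, f i, Set.ext fun x => ⟨?_, ?_⟩⟩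
  · rintro ⟨hxP, hx⟩
    refine ⟨hxP, fun y hy => ?_⟩
    simp only [_root_.sum_apply]
    rw [Finset.sum_congr rfl hx]
    exact Finset.sum_le_sum (hP y hy)
  · rintro ⟨hxP, hmax⟩
    refine ⟨hxP, (Finset.sum_eq_sum_iff_of_le (hP x hxP)).1 (le_antisymm
      (Finset.sum_le_sum (hP x hxP)) ?_)⟩
    have := hmax x₀ hx₀P
    simp only [_root_.sum_apply] at this
    rwa [Finset.sum_congr rfl hx₀] at this

/-- Otherwise `ν ± s • z` stays in the polyhedron for small `s`, so `ν` is not exposed. -/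
theorem eq_zero_of_isExposed_singleton [AddCommGroup W] [Module ℝ W] [Finite ι]
    (L : Submodule ℝ W) (f : ι → StrongDual ℝ W) (b : ι → ℝ) {ν : W}
    (hν : ν ∈ {x | x ∈ L ∧ ∀ i, f i x ≤ b i})
    (hexp : IsExposed ℝ {x | x ∈ L ∧ ∀ i, f i x ≤ b i} {ν})
    {z : W} (hz : z ∈ L) (htight : ∀ i, f i ν = b i → f i z = 0) : z = 0 := by
  obtain ⟨ℓ, hℓ⟩ := hexp (Set.singleton_nonempty ν)
  have hmax : ∀ y, y ∈ L → (∀ i, f i y ≤ b i) → ℓ y ≤ ℓ ν := fun y hyL hy =>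
    (hℓ.subset rfl).2 y ⟨hyL, hy⟩
  have hnear : ∀ᶠ s : ℝ in nhds 0, ∀ i, f i (ν + s • z) ≤ b i := by
    refine Filter.eventually_all.2 fun i => ?_
    by_cases hi : f i ν = b i
    · exact Filter.Eventually.of_forall fun s => by simp [hi, htight i hi]
    · have hlt : f i (ν + (0 : ℝ) • z) < b i := by simpa using lt_of_le_of_ne (hν.2 i) hi
      have hcont : Continuous fun s : ℝ => f i (ν + s • z) := by
        simp only [map_add, map_smul, smul_eq_mul]; fun_prop
      exact (hcont.continuousAt.eventually_lt continuousAt_const hlt).mono fun _ => le_of_lt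
  obtain ⟨δ, hδ, hball⟩ := Metric.eventually_nhds_iff_ball.1 hnear
  have hmem : ∀ s, |s| < δ → ν + s • z ∈ L ∧ ℓ (ν + s • z) ≤ ℓ ν := fun s hs =>
    ⟨L.add_mem hν.1 (L.smul_mem s hz),
      hmax _ (L.add_mem hν.1 (L.smul_mem s hz)) (hball s (by simpa [Real.dist_eq] using hs))⟩
  have hδ2 : |δ / 2| < δ := by rw [abs_of_pos (by positivity)]; linarith
  have hℓz : ℓ z = 0 := by
    have h₁ := (hmem (δ / 2) hδ2).2
    have h₂ := (hmem (-(δ / 2)) (by rwa [abs_neg])).2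
    simp only [map_add, map_smul, smul_eq_mul] at h₁ h₂
    nlinarith
  have hfix : ν + (δ / 2) • z = ν := by
    refine (hℓ.superset ⟨⟨(hmem _ hδ2).1,
      hball _ (by rwa [Metric.mem_ball, Real.dist_eq, sub_zero])⟩, fun y hy => ?_⟩ :
        ν + (δ / 2) • z ∈ ({ν} : Set W))
    simpa [hℓz] using hmax y hy.1 hy.2
  simpa [hδ.ne'] using hfix

end Polyhedron

section DotProduct

variable {E : Type} [Fintype E]

theorem dotProduct_multiset_sum (x : E → ℝ) (m : Multiset (E → ℝ)) :
    x ⬝ᵥ m.sum = (m.map (x ⬝ᵥ ·)).sum :=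
  map_multiset_sum (dotProductBilin ℝ ℝ x) m

theorem exists_mem_forall_dotProduct_eq (T : Submodule ℝ (E → ℝ)) (w : E → ℝ) :
    ∃ p ∈ T, ∀ y ∈ T, p ⬝ᵥ y = w ⬝ᵥ y := by
  set K : Submodule ℝ (EuclideanSpace ℝ E) := T.comap (WithLp.linearEquiv 2 ℝ (E → ℝ)).toLinearMap
  have hK : ∀ y, WithLp.toLp 2 y ∈ K ↔ y ∈ T := fun y => Iff.rfl
  set p := K.starProjection (WithLp.toLp 2 w)
  refine ⟨p.ofLp, K.starProjection_apply_mem _, fun y hy => ?_⟩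
  have h := K.starProjection_inner_eq_zero (WithLp.toLp 2 w) (WithLp.toLp 2 y) ((hK y).2 hy)
  rw [← WithLp.toLp_ofLp 2 (K.starProjection _), ← WithLp.toLp_sub,
    EuclideanSpace.inner_toLp_toLp, star_trivial, dotProduct_sub] at h
  rw [dotProduct_comm, dotProduct_comm w]
  linarith

noncomputable def twoDot (β : E → ℝ) : StrongDual ℝ (E → ℝ) :=
  LinearMap.toContinuousLinearMap
    { toFun := fun x => 2 * (x ⬝ᵥ β)
      map_add' := fun x y => by rw [add_dotProduct, mul_add]
      map_smul' := fun c x => by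
        rw [smul_dotProduct, smul_eq_mul, RingHom.id_apply, smul_eq_mul]; ring }

@[simp]
theorem twoDot_apply (β x : E → ℝ) : twoDot β x = 2 * (x ⬝ᵥ β) := rfl

end DotProduct

section Conforms

variable {E : Type}

def Conforms (y x : E → ℝ) : Prop := ∀ e, y e ≠ 0 → y e = x e

theorem Conforms.trans {x y z : E → ℝ} (hyx : Conforms y x) (hxz : Conforms x z) :
    Conforms y z := fun e he => (hyx e he).trans (hxz e (hyx e he ▸ he))

theorem Conforms.neg {x y : E → ℝ} (h : Conforms y x) : Conforms (-y) (-x) := fun e he => by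
  simpa using h e (by simpa using he)

theorem Conforms.oval_eq {x y : E → ℝ} (h : Conforms y x) {oe : E × Bool} (hy : y oe.1 ≠ 0) :
    oval y oe = oval x oe := by
  simp only [oval, h oe.1 hy]

theorem Conforms.suppPos_subset {x y : E → ℝ} (h : Conforms y x) : suppPos y ⊆ suppPos x := by
  intro oe hoe
  have hy : y oe.1 ≠ 0 := fun h0 => by simp [suppPos, oval, h0] at hoe
  simpa only [suppPos, Set.mem_ofPred_eq, ← h.oval_eq hy] using hoe

theorem exists_mem_ne_zero_of_sum_apply_ne_zero {m : Multiset (E → ℝ)} {e : E}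
    (h : m.sum e ≠ 0) : ∃ y ∈ m, y e ≠ 0 := by
  by_contra! hm
  refine h ((Pi.multiset_sum_apply e m).trans (Multiset.sum_eq_zero fun a ha => ?_))
  obtain ⟨y, hy, rfl⟩ := Multiset.mem_map.1 ha
  exact hm y hy

variable [Fintype E]

theorem sum_map_dotProduct_self_of_conforms {x : E → ℝ} (m : Multiset (E → ℝ))
    (hm : ∀ y ∈ m, Conforms y x) (hsum : m.sum = x) :
    (m.map fun y => y ⬝ᵥ y).sum = x ⬝ᵥ x := by
  have hy : ∀ y ∈ m, y ⬝ᵥ y = x ⬝ᵥ y := fun y hy => Finset.sum_congr rfl fun e _ => by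
    by_cases h : y e = 0
    · simp [h]
    · rw [← hm y hy e h]
  rw [Multiset.map_congr rfl hy, ← dotProduct_multiset_sum, hsum]

end Conforms

section Orientation

variable {E : Type}

def IsOrientation (D : Set (E × Bool)) : Prop := ∀ e, ((e, true) ∈ D ↔ (e, false) ∉ D)

theorem IsOrientation.mem_not_iff {D : Set (E × Bool)} (hD : IsOrientation D) (e : E)
    (b : Bool) : (e, !b) ∈ D ↔ (e, b) ∉ D := by
  cases b <;> simp [hD e]

theorem oval_not (x : E → ℝ) (e : E) (b : Bool) : oval x (e, !b) = -oval x (e, b) := by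
  cases b <;> simp [oval]

/-- The vector `𝟙_D`. -/
noncomputable def orientationVec (D : Set (E × Bool)) : E → ℝ :=
  fun e => if (e, true) ∈ D then 1 else -1

theorem suppPos_subset_iff {x : E → ℝ} {D : Set (E × Bool)} :
    suppPos x ⊆ D ↔ ∀ e, (0 < x e → (e, true) ∈ D) ∧ (x e < 0 → (e, false) ∈ D) := by
  refine ⟨fun h e => ⟨fun hp => h (by simpa [suppPos, oval] using hp),
    fun hn => h (by simpa [suppPos, oval] using hn)⟩, ?_⟩
  rintro h ⟨e, _ | _⟩ hpos <;> simp only [suppPos, oval, Set.mem_ofPred_eq] at hpos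
  · exact (h e).2 (by simpa using hpos)
  · exact (h e).1 (by simpa using hpos)

theorem orientationVec_mul_eq_iff {D : Set (E × Bool)} (hD : IsOrientation D) {c : ℝ}
    (hc : c = 0 ∨ c = 1 ∨ c = -1) (e : E) :
    orientationVec D e * c = c * c ↔ (0 < c → (e, true) ∈ D) ∧ (c < 0 → (e, false) ∈ D) := by
  simp only [orientationVec, hD e]
  by_cases h : (e, false) ∈ D <;> rcases hc with rfl | rfl | rfl <;> simp [h] <;> norm_num

end Orientation

theorem sum_Ioc_ite_le {m M c : ℤ} (hm : m ≤ c) (hM : c ≤ M) :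
    ∑ t ∈ Finset.Ioc m M, (if t ≤ c then (1 : ℝ) else 0) = c - m := by
  rw [Finset.sum_boole, show (Finset.Ioc m M).filter (· ≤ c) = Finset.Ioc m c by
    ext t; simp only [Finset.mem_filter, Finset.mem_Ioc]; omega, Int.card_Ioc,
    ← Int.cast_natCast, Int.toNat_of_nonneg (by omega)]
  push_cast; ring

theorem sum_Ioc_sq_ite_sub_ite_le {m M a b : ℤ} (ha : m ≤ a) (ha' : a ≤ M) (hb : m ≤ b)
    (hb' : b ≤ M) :
    ∑ t ∈ Finset.Ioc m M, ((if t ≤ b then (1 : ℝ) else 0) - if t ≤ a then 1 else 0) ^ 2 ≤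
      ((b : ℝ) - a) ^ 2 := by
  have hsq : ∀ t : ℤ, ((if t ≤ b then (1 : ℝ) else 0) - if t ≤ a then 1 else 0) ^ 2 =
      (if t ≤ b then 1 else 0) + (if t ≤ a then 1 else 0) - 2 * (if t ≤ min a b then 1 else 0) :=
    fun t => by simp only [le_min_iff]; split_ifs <;> first | (exfalso; omega) | norm_num
  simp only [hsq, Finset.sum_sub_distrib, Finset.sum_add_distrib, ← Finset.mul_sum]
  rw [sum_Ioc_ite_le hb hb', sum_Ioc_ite_le ha ha',
    sum_Ioc_ite_le (le_min ha hb) ((min_le_left _ _).trans ha')]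
  rcases le_total a b with hab | hab
  · have : ((b - a : ℤ) : ℝ) ≤ ((b - a : ℤ) : ℝ) ^ 2 := by exact_mod_cast Int.le_self_sq _
    rw [min_eq_left hab]; push_cast at this ⊢; linarith
  · have : ((a - b : ℤ) : ℝ) ≤ ((a - b : ℤ) : ℝ) ^ 2 := by exact_mod_cast Int.le_self_sq _
    rw [min_eq_right hab]; push_cast at this ⊢; nlinarith

theorem exists_walk_of_reflTransGen {α : Type*} {r : α → α → Prop} {a b : α}
    (h : Relation.ReflTransGen r a b) :
    ∃ (n : ℕ) (w : ℕ → α), w 0 = a ∧ w n = b ∧ ∀ i < n, r (w i) (w (i + 1)) := by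
  induction h using Relation.ReflTransGen.head_induction_on with
  | refl => exact ⟨0, fun _ => b, rfl, rfl, fun i hi => absurd hi (Nat.not_lt_zero i)⟩
  | head hac _ ih =>
    obtain ⟨n, w, hw0, hwn, hw⟩ := ih
    refine ⟨n + 1, fun | 0 => _ | i + 1 => w i, rfl, hwn, fun i hi => ?_⟩
    rcases i with _ | i
    · rw [← hw0] at hac
      exact hac
    · exact hw i (by omega)

namespace Multigraph

section Cuts

variable {V E : Type} (G : Multigraph V E)

theorem dm_apply {A : Type} [Ring A] (f : V → A) (e : E) :
    G.dm f e = f (G.head e) - f (G.tail e) := rfl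

theorem oval_dm {A : Type} [Ring A] (f : V → A) (oe : E × Bool) :
    oval (G.dm f) oe = f (G.ohead oe) - f (G.otail oe) := by
  rcases oe with ⟨e, _ | _⟩ <;> simp [oval, dm, ohead, otail]

theorem adj_tail_head (e : E) : G.adjG.Adj (G.tail e) (G.head e) :=
  ⟨G.loopless e, Or.inl ⟨e, rfl, rfl⟩⟩

def dmLinear : (V → ℝ) →ₗ[ℝ] (E → ℝ) where
  toFun := G.dm
  map_add' f g := funext fun e => by simp only [dm_apply, Pi.add_apply]; ring
  map_smul' c f := funext fun e => by
    simp only [dm_apply, Pi.smul_apply, smul_eq_mul, RingHom.id_apply]; ring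

/-- `F_ℝ` as a submodule. -/
def cutSpace : Submodule ℝ (E → ℝ) := LinearMap.range G.dmLinear

/-- The cut vector `d(χ_A)`. -/
noncomputable def cut (A : Set V) : E → ℝ := G.dm (A.indicator 1)

theorem cut_apply (A : Set V) (e : E) :
    G.cut A e = A.indicator 1 (G.head e) - A.indicator 1 (G.tail e) := rfl

theorem cut_mem_FR (A : Set V) : G.cut A ∈ FR G := ⟨_, rfl⟩

theorem cut_mem_FZr (A : Set V) : G.cut A ∈ FZr G :=
  ⟨A.indicator 1, funext fun e => by simp [cut_apply, dm_apply, Set.indicator_apply]⟩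

theorem cut_compl (A : Set V) : G.cut Aᶜ = -G.cut A := funext fun e => by
  simp only [cut_apply, Set.indicator_apply, Set.mem_compl_iff, Pi.neg_apply, Pi.one_apply]
  split_ifs <;> norm_num

theorem cut_add_cut (C C' : Set V) : G.cut C + G.cut C' = G.cut (C ∪ C') + G.cut (C ∩ C') :=
  funext fun e => by
    simp only [Pi.add_apply, cut_apply, Set.indicator_apply, Set.mem_union, Set.mem_inter_iff,
      Pi.one_apply]
    split_ifs <;> simp_all

theorem cut_apply_eq_one_iff (A : Set V) (e : E) :
    G.cut A e = 1 ↔ G.head e ∈ A ∧ G.tail e ∉ A := by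
  simp only [cut_apply, Set.indicator_apply, Pi.one_apply]; split_ifs <;> simp_all; norm_num

theorem cut_apply_eq_neg_one_iff (A : Set V) (e : E) :
    G.cut A e = -1 ↔ G.head e ∉ A ∧ G.tail e ∈ A := by
  simp only [cut_apply, Set.indicator_apply, Pi.one_apply]; split_ifs <;> simp_all; norm_num

theorem cut_apply_trichotomy (A : Set V) (e : E) :
    G.cut A e = 0 ∨ G.cut A e = 1 ∨ G.cut A e = -1 := by
  simp only [cut_apply, Set.indicator_apply, Pi.one_apply]; split_ifs <;> norm_num

theorem cut_apply_eq_one_of_pos {A : Set V} {e : E} (h : 0 < G.cut A e) : G.cut A e = 1 := by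
  rcases G.cut_apply_trichotomy A e with h' | h' | h' <;> rw [h'] at h ⊢ <;> norm_num at h

theorem cut_apply_eq_neg_one_of_neg {A : Set V} {e : E} (h : G.cut A e < 0) :
    G.cut A e = -1 := by
  rcases G.cut_apply_trichotomy A e with h' | h' | h' <;> rw [h'] at h ⊢ <;> norm_num at h

theorem cut_singleton_head (e : E) : G.cut {G.head e} e = 1 :=
  (G.cut_apply_eq_one_iff _ e).2 ⟨rfl, fun h => G.loopless e h⟩

theorem cut_singleton_eq_dm_single (v : V) : G.cut {v} = G.dm (Pi.single v 1) := by
  rw [cut, Set.indicator_singleton]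
  rfl

theorem otail_not (e : E) (b : Bool) : G.otail (e, !b) = G.ohead (e, b) := by
  cases b <;> rfl

theorem ohead_not (e : E) (b : Bool) : G.ohead (e, !b) = G.otail (e, b) := by
  cases b <;> rfl

end Cuts

section Components

variable {V E : Type} (G : Multigraph V E)

def AdjIn (S : Set V) (a b : V) : Prop := G.adjG.Adj a b ∧ a ∈ S ∧ b ∈ S

instance (S : Set V) : Std.Symm (G.AdjIn S) := ⟨fun _ _ h => ⟨h.1.symm, h.2.2, h.2.1⟩⟩

def PreconnectedOn (S : Set V) : Prop :=
  ∀ x ∈ S, ∀ y ∈ S, Relation.ReflTransGen (G.AdjIn S) x y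

/-- The component of `G[S]` through `x`; empty if `x ∉ S`. -/
def component (S : Set V) (x : V) : Set V := {y | y ∈ S ∧ Relation.ReflTransGen (G.AdjIn S) x y}

variable {G}

theorem AdjIn.mono {S T : Set V} (hST : S ⊆ T) {a b : V} (h : G.AdjIn S a b) : G.AdjIn T a b :=
  ⟨h.1, hST h.2.1, hST h.2.2⟩

theorem mem_component_self {S : Set V} {x : V} (hx : x ∈ S) : x ∈ G.component S x :=
  ⟨hx, .refl⟩

theorem mem_component_of_adj {S : Set V} {x y z : V} (hy : y ∈ G.component S x)
    (hyz : G.adjG.Adj y z) (hz : z ∈ S) : z ∈ G.component S x :=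
  ⟨hz, hy.2.tail ⟨hyz, hy.1, hz⟩⟩

theorem component_eq_of_mem {S : Set V} {x y : V} (hy : y ∈ G.component S x) :
    G.component S y = G.component S x :=
  Set.ext fun _ => ⟨fun hz => ⟨hz.1, hy.2.trans hz.2⟩,
    fun hz => ⟨hz.1, (Std.Symm.symm _ _ hy.2).trans hz.2⟩⟩

theorem preconnectedOn_component (S : Set V) (x : V) : G.PreconnectedOn (G.component S x) := by
  have hx : ∀ y ∈ G.component S x, Relation.ReflTransGen (G.AdjIn (G.component S x)) x y := by
    rintro y ⟨-, hxy⟩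
    induction hxy with
    | refl => exact .refl
    | tail hxa hab ih => exact ih.tail ⟨hab.1, ⟨hab.2.1, hxa⟩, ⟨hab.2.2, hxa.tail hab⟩⟩
  exact fun y hy z hz => (Std.Symm.symm _ _ (hx y hy)).trans (hx z hz)

theorem ncomp_eq_one {S : Set V} (hne : S.Nonempty) (hS : G.PreconnectedOn S) :
    ncomp G S = 1 := by
  have hreach : ∀ {u w : V} (hu : u ∈ S) (hw : w ∈ S), Relation.ReflTransGen (G.AdjIn S) u w →
      (G.adjG.induce S).Reachable ⟨u, hu⟩ ⟨w, hw⟩ := by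
    intro u w hu hw h
    induction h with
    | refl => rfl
    | tail _ hab ih => exact (ih hab.2.1).trans (SimpleGraph.Adj.reachable (by simpa using hab.1))
  rw [ncomp, Nat.card_eq_one_iff_unique]
  refine ⟨⟨fun c c' => ?_⟩, ⟨SimpleGraph.connectedComponentMk _ ⟨_, hne.some_mem⟩⟩⟩
  induction c using SimpleGraph.ConnectedComponent.ind with | h u => ?_
  induction c' using SimpleGraph.ConnectedComponent.ind with | h w => ?_
  exact SimpleGraph.ConnectedComponent.sound (hreach u.2 w.2 (hS u u.2 w w.2))

theorem eq_univ_of_adj_closed (hG : G.Conn) {K : Set V} (hne : K.Nonempty)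
    (hcl : ∀ y ∈ K, ∀ z, G.adjG.Adj y z → z ∈ K) : K = Set.univ := by
  obtain ⟨k, hk⟩ := hne
  refine Set.eq_univ_of_forall fun v => ?_
  obtain ⟨w⟩ := hG.preconnected k v
  induction w with
  | nil => exact hk
  | cons hadj _ ih => exact ih (hcl _ hk _ hadj)

/-- Every component of `G[V ∖ A]` other than `G.component Aᶜ x` is attached to the connected
set `A`. -/
theorem preconnectedOn_compl_component (hG : G.Conn) {A : Set V} (hA : A.Nonempty)
    (hAc : G.PreconnectedOn A) (x : V) : G.PreconnectedOn (G.component Aᶜ x)ᶜ := by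
  have hAK : A ⊆ (G.component Aᶜ x)ᶜ := fun a ha haK => haK.1 ha
  have hto : ∀ v ∈ (G.component Aᶜ x)ᶜ, ∃ a ∈ A,
      Relation.ReflTransGen (G.AdjIn (G.component Aᶜ x)ᶜ) v a := by
    intro v hv
    by_cases hvA : v ∈ A
    · exact ⟨v, hvA, .refl⟩
    have hK'K : G.component Aᶜ v ⊆ (G.component Aᶜ x)ᶜ := fun y hy hyK =>
      hv ((component_eq_of_mem hy).symm.trans (component_eq_of_mem hyK) ▸ mem_component_self hvA)
    obtain ⟨y, hy, z, hz, hyz⟩ : ∃ y ∈ G.component Aᶜ v, ∃ z ∈ A, G.adjG.Adj y z := by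
      by_contra! hno
      obtain ⟨a, ha⟩ := hA
      have := eq_univ_of_adj_closed hG ⟨v, mem_component_self hvA⟩ fun y hy z hyz =>
        mem_component_of_adj hy hyz fun hzA => hno y hy z hzA hyz
      exact (this.symm ▸ Set.mem_univ a : a ∈ G.component Aᶜ v).1 ha
    have hvy : Relation.ReflTransGen (G.AdjIn (G.component Aᶜ x)ᶜ) v y :=
      Relation.ReflTransGen.mono (fun _ _ h => h.mono hK'K) _ _
        (preconnectedOn_component Aᶜ v v (mem_component_self hvA) y hy)
    exact ⟨z, hz, hvy.tail ⟨hyz, hK'K hy, hAK hz⟩⟩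
  intro v hv w hw
  obtain ⟨a, ha, hva⟩ := hto v hv
  obtain ⟨b, hb, hwb⟩ := hto w hw
  exact (hva.trans (Relation.ReflTransGen.mono (fun _ _ h => h.mono hAK) _ _
    (hAc a ha b hb))).trans (Std.Symm.symm _ _ hwb)

theorem isBondElt_cut_compl_component (hG : G.Conn) {A : Set V} (hA : A.Nonempty)
    (hAc : G.PreconnectedOn A) {x : V} (hx : x ∉ A) :
    IsBondElt G (G.cut (G.component Aᶜ x)ᶜ) := by
  have hK : (G.component Aᶜ x).Nonempty := ⟨x, mem_component_self hx⟩
  have hKc : (G.component Aᶜ x)ᶜ.Nonempty := hA.mono fun a ha haK => haK.1 ha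
  refine ⟨_, hKc, by rwa [compl_compl], ?_, rfl⟩
  rw [compl_compl, ncomp_eq_one hK (preconnectedOn_component _ _),
    ncomp_eq_one hKc (preconnectedOn_compl_component hG hA hAc x)]

theorem conforms_cut_component (S : Set V) (x : V) :
    Conforms (G.cut (G.component S x)) (G.cut S) := by
  intro e he
  have hadj := G.adj_tail_head e
  rcases G.cut_apply_trichotomy (G.component S x) e with h | h | h
  · exact absurd h he
  · obtain ⟨hh, ht⟩ := (G.cut_apply_eq_one_iff _ e).1 h
    rw [h, eq_comm, G.cut_apply_eq_one_iff]
    exact ⟨hh.1, fun htS => ht (mem_component_of_adj hh hadj.symm htS)⟩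
  · obtain ⟨hh, ht⟩ := (G.cut_apply_eq_neg_one_iff _ e).1 h
    rw [h, eq_comm, G.cut_apply_eq_neg_one_iff]
    exact ⟨fun hhS => hh (mem_component_of_adj ht hadj hhS), ht.1⟩

variable [Fintype V] (G)

noncomputable def components (S : Set V) : Finset (Set V) :=
  (Finset.univ.filter (· ∈ S)).image (G.component S)

variable {G}

theorem mem_components {S K : Set V} : K ∈ G.components S ↔ ∃ x ∈ S, G.component S x = K := by
  simp [components]

theorem indicator_eq_sum_components (S : Set V) :
    S.indicator (1 : V → ℝ) = ∑ K ∈ G.components S, K.indicator 1 := by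
  funext v
  rw [Finset.sum_apply]
  by_cases hv : v ∈ S
  · rw [Finset.sum_eq_single_of_mem _ (mem_components.2 ⟨v, hv, rfl⟩)]
    · simp [hv, mem_component_self hv]
    · rintro K hK hKv
      obtain ⟨x, -, rfl⟩ := mem_components.1 hK
      exact Set.indicator_of_notMem (fun hvK => hKv (component_eq_of_mem hvK).symm) (1 : V → ℝ)
  · rw [Finset.sum_eq_zero fun K hK => ?_, Set.indicator_of_notMem hv]
    obtain ⟨x, -, rfl⟩ := mem_components.1 hK
    exact Set.indicator_of_notMem (fun hvK => hv hvK.1) (1 : V → ℝ)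

theorem cut_eq_sum_components (S : Set V) : G.cut S = ∑ K ∈ G.components S, G.cut K := by
  rw [cut, indicator_eq_sum_components]
  exact map_sum G.dmLinear _ _

/-- `d(χ_A) = ∑_{K₁} d(χ_{K₁}) = ∑_{K₁} ∑_K d(χ_{V ∖ K})`, where `K₁` runs over the components
of `G[A]` and `K` over those of `G[V ∖ K₁]`. -/
theorem exists_bond_decomposition (hG : G.Conn) (A : Set V) :
    ∃ P : Multiset (Set V), (∀ C ∈ P, IsBondElt G (G.cut C) ∧ Conforms (G.cut C) (G.cut A)) ∧
      (P.map G.cut).sum = G.cut A := by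
  refine ⟨(G.components A).val.bind fun K₁ => (G.components K₁ᶜ).val.map compl, ?_, ?_⟩
  · intro C hC
    simp only [Multiset.mem_bind, Multiset.mem_map, Finset.mem_val] at hC
    obtain ⟨K₁, hK₁, K, hK, rfl⟩ := hC
    obtain ⟨x, hx, rfl⟩ := mem_components.1 hK₁
    obtain ⟨y, hy, rfl⟩ := mem_components.1 hK
    refine ⟨isBondElt_cut_compl_component hG ⟨x, mem_component_self hx⟩
      (preconnectedOn_component A x) hy, ?_⟩
    have h := (conforms_cut_component (G := G) (G.component A x)ᶜ y).neg
    rw [← cut_compl, ← cut_compl, compl_compl] at h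
    exact h.trans (conforms_cut_component A x)
  · rw [Multiset.map_bind, Multiset.sum_bind, cut_eq_sum_components A, Finset.sum_eq_multiset_sum]
    congr 1
    refine Multiset.map_congr rfl fun K₁ _ => ?_
    rw [Multiset.map_map, ← Finset.sum_eq_multiset_sum]
    simp only [Function.comp_apply, cut_compl, Finset.sum_neg_distrib, ← cut_eq_sum_components,
      neg_neg]

end Components

section Voronoi

variable {V E : Type} {G : Multigraph V E}

theorem IsBondElt.exists_eq_cut {β : E → ℝ} (h : IsBondElt G β) : ∃ C, β = G.cut C := by
  obtain ⟨C, -, -, -, rfl⟩ := h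
  exact ⟨C, rfl⟩

theorem dm_intCast_eq_sum_cut (g : V → ℤ) {m M : ℤ} (hm : ∀ v, m ≤ g v) (hM : ∀ v, g v ≤ M) :
    G.dm (fun v => (g v : ℝ)) = ∑ t ∈ Finset.Ioc m M, G.cut {v | t ≤ g v} := by
  funext e
  simp only [Finset.sum_apply, cut_apply, dm_apply, Set.indicator_apply, Set.mem_ofPred_eq,
    Pi.one_apply, Finset.sum_sub_distrib]
  rw [sum_Ioc_ite_le (hm _) (hM _), sum_Ioc_ite_le (hm _) (hM _)]
  ring

variable [Fintype E]

theorem mem_VorF_zero_iff {x : E → ℝ} :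
    x ∈ VorF G 0 ↔ x ∈ FR G ∧ ∀ α ∈ FZr G, 2 * (x ⬝ᵥ α) ≤ α ⬝ᵥ α := by
  have hsq : ∀ α : E → ℝ, ∑ e, (x - α) e ^ 2 = ∑ e, x e ^ 2 - 2 * (x ⬝ᵥ α) + α ⬝ᵥ α := fun α => by
    simp only [dotProduct, Finset.mul_sum, ← Finset.sum_sub_distrib, ← Finset.sum_add_distrib]
    exact Finset.sum_congr rfl fun e _ => by simp only [Pi.sub_apply]; ring
  simp only [VorF, Set.mem_ofPred_eq, sub_zero, _root_.enorm,
    Real.sqrt_le_sqrt_iff (Finset.sum_nonneg fun _ _ => sq_nonneg _), hsq]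
  exact and_congr_right fun _ => forall₂_congr fun _ _ => by constructor <;> intro <;> linarith

theorem mem_Fhyp_iff {β x : E → ℝ} : x ∈ Fhyp G β ↔ x ∈ FR G ∧ 2 * (x ⬝ᵥ β) = β ⬝ᵥ β := by
  simp only [Fhyp, dotProduct, sq, Set.mem_ofPred_eq]

theorem sum_cut_dotProduct_self_le (g : V → ℤ) {m M : ℤ} (hm : ∀ v, m ≤ g v)
    (hM : ∀ v, g v ≤ M) :
    ∑ t ∈ Finset.Ioc m M, G.cut {v | t ≤ g v} ⬝ᵥ G.cut {v | t ≤ g v} ≤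
      G.dm (fun v => (g v : ℝ)) ⬝ᵥ G.dm (fun v => (g v : ℝ)) := by
  simp only [dotProduct]
  rw [Finset.sum_comm]
  refine Finset.sum_le_sum fun e _ => ?_
  simp only [cut_apply, dm_apply, Set.indicator_apply, Set.mem_ofPred_eq, Pi.one_apply, ← sq]
  exact sum_Ioc_sq_ite_sub_ite_le (hm _) (hM _) (hm _) (hM _)

variable [Fintype V]

theorem two_dotProduct_cut_le (hG : G.Conn) {x : E → ℝ}
    (H : ∀ β, IsBondElt G β → 2 * (x ⬝ᵥ β) ≤ β ⬝ᵥ β) (A : Set V) :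
    2 * (x ⬝ᵥ G.cut A) ≤ G.cut A ⬝ᵥ G.cut A := by
  obtain ⟨P, hP, hsum⟩ := exists_bond_decomposition hG A
  have hconf : ∀ y ∈ P.map G.cut, Conforms y (G.cut A) := by
    simp only [Multiset.mem_map]
    rintro _ ⟨C, hC, rfl⟩
    exact (hP C hC).2
  rw [← sum_map_dotProduct_self_of_conforms _ hconf hsum, ← hsum, dotProduct_multiset_sum,
    Multiset.map_map, Multiset.map_map, ← Multiset.sum_map_mul_left]
  exact Multiset.sum_map_le_sum_map _ _ fun C hC => H _ (hP C hC).1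

theorem mem_VorF_zero_of_bond_ineqs (hG : G.Conn) {x : E → ℝ} (hx : x ∈ FR G)
    (H : ∀ β, IsBondElt G β → 2 * (x ⬝ᵥ β) ≤ β ⬝ᵥ β) : x ∈ VorF G 0 := by
  refine mem_VorF_zero_iff.2 ⟨hx, ?_⟩
  rintro _ ⟨g, rfl⟩
  obtain ⟨m, hm⟩ := (Set.finite_range g).bddBelow
  obtain ⟨M, hM⟩ := (Set.finite_range g).bddAbove
  have hm' : ∀ v, m ≤ g v := fun v => hm ⟨v, rfl⟩
  have hM' : ∀ v, g v ≤ M := fun v => hM ⟨v, rfl⟩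
  calc 2 * (x ⬝ᵥ G.dm fun v => (g v : ℝ))
      = ∑ t ∈ Finset.Ioc m M, 2 * (x ⬝ᵥ G.cut {v | t ≤ g v}) := by
        rw [dm_intCast_eq_sum_cut g hm' hM', dotProduct_sum, Finset.mul_sum]
    _ ≤ ∑ t ∈ Finset.Ioc m M, G.cut {v | t ≤ g v} ⬝ᵥ G.cut {v | t ≤ g v} :=
        Finset.sum_le_sum fun t _ => two_dotProduct_cut_le hG H _
    _ ≤ _ := sum_cut_dotProduct_self_le g hm' hM'

theorem VorF_zero_eq (hG : G.Conn) :
    VorF G 0 = {x | x ∈ G.cutSpace ∧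
      ∀ C : {C : Set V // IsBondElt G (G.cut C)}, twoDot (G.cut C) x ≤ G.cut C ⬝ᵥ G.cut C} := by
  ext x
  refine ⟨fun hx => ⟨(mem_VorF_zero_iff.1 hx).1, fun C => ?_⟩, fun hx => ?_⟩
  · exact (mem_VorF_zero_iff.1 hx).2 _ (G.cut_mem_FZr C)
  · refine mem_VorF_zero_of_bond_ineqs hG hx.1 fun β hβ => ?_
    obtain ⟨C, rfl⟩ := IsBondElt.exists_eq_cut hβ
    exact hx.2 ⟨C, hβ⟩

end Voronoi

section Orientations

variable {V E : Type} {G : Multigraph V E}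

theorem orientationVec_mul_cut_le (D : Set (E × Bool)) (C : Set V) (e : E) :
    orientationVec D e * G.cut C e ≤ G.cut C e * G.cut C e := by
  rcases G.cut_apply_trichotomy C e with h | h | h <;> rw [h] <;> unfold orientationVec <;>
    split_ifs <;> norm_num

variable [Fintype E]

theorem orientationVec_dotProduct_cut_le (D : Set (E × Bool)) (C : Set V) :
    orientationVec D ⬝ᵥ G.cut C ≤ G.cut C ⬝ᵥ G.cut C :=
  Finset.sum_le_sum fun e _ => orientationVec_mul_cut_le D C e

theorem orientationVec_dotProduct_cut_eq_iff {D : Set (E × Bool)} (hD : IsOrientation D)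
    (C : Set V) :
    orientationVec D ⬝ᵥ G.cut C = G.cut C ⬝ᵥ G.cut C ↔ suppPos (G.cut C) ⊆ D := by
  rw [dotProduct, dotProduct,
    Finset.sum_eq_sum_iff_of_le fun e _ => orientationVec_mul_cut_le D C e, suppPos_subset_iff]
  simp only [Finset.mem_univ, true_implies]
  exact forall_congr' fun e => orientationVec_mul_eq_iff hD (G.cut_apply_trichotomy C e) e

end Orientations

section Acyclicity

variable {V E : Type} (G : Multigraph V E) (D : Set (E × Bool))

def DStep (a b : V) : Prop := ∃ oe ∈ D, G.otail oe = a ∧ G.ohead oe = b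

def IsUpSet (A : Set V) : Prop := ∀ oe ∈ D, G.otail oe ∈ A → G.ohead oe ∈ A

def reachSet (v : V) : Set V := {u | Relation.ReflTransGen (G.DStep D) v u}

variable {G D}

theorem mem_reachSet_self (v : V) : v ∈ G.reachSet D v := Relation.ReflTransGen.refl

theorem isUpSet_reachSet (v : V) : G.IsUpSet D (G.reachSet D v) :=
  fun oe hoe h => Relation.ReflTransGen.tail h ⟨oe, hoe, rfl, rfl⟩

theorem suppPos_cut_subset_of_isUpSet (hD : IsOrientation D) {A : Set V} (hA : G.IsUpSet D A) :
    suppPos (G.cut A) ⊆ D := by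
  rintro ⟨e, b⟩ hpos
  rw [suppPos, Set.mem_ofPred_eq, cut, oval_dm] at hpos
  simp only [Set.indicator_apply, Pi.one_apply] at hpos
  split_ifs at hpos with hh ht <;> norm_num at hpos
  by_contra hoe
  have := hA (e, !b) ((hD.mem_not_iff e b).2 hoe)
  rw [otail_not, ohead_not] at this
  exact ht (this hh)

theorem _root_.IsAcyclicOrientation.false_of_closed_walk (hD : IsAcyclicOrientation G D)
    (n : ℕ) : ∀ w : ℕ → V, w (n + 1) = w 0 → (∀ i ≤ n, G.DStep D (w i) (w (i + 1))) → False := by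
  induction n using Nat.strong_induction_on with
  | _ n ih =>
  intro w hclosed hstep
  by_cases hinj : Set.InjOn w (Set.Iic n)
  · choose es hes using hstep
    refine hD.2 ⟨n + 1, fun i => w i, fun i => es i (Nat.lt_succ_iff.1 i.2), n.succ_pos,
      fun i j h => Fin.ext (hinj (Set.mem_Iic.2 (Nat.lt_succ_iff.1 i.2))
        (Set.mem_Iic.2 (Nat.lt_succ_iff.1 j.2)) h), fun i => ?_⟩
    obtain ⟨hmem, htail, hhead⟩ := hes i (Nat.lt_succ_iff.1 i.2)
    refine ⟨hmem, htail, hhead.trans ?_⟩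
    rcases (Nat.lt_succ_iff.1 i.2).lt_or_eq with hi | hi
    · simp only [Nat.mod_eq_of_lt (Nat.succ_lt_succ hi)]
    · simp [hi, hclosed]
  -- a repeated vertex `w i = w j` with `i < j` closes up a strictly shorter closed walk
  obtain ⟨i, j, hij, hjn, hw⟩ : ∃ i j, i < j ∧ j ≤ n ∧ w i = w j := by
    simp only [Set.InjOn, Set.mem_Iic, not_forall] at hinj
    obtain ⟨i, hi, j, hj, hw, hne⟩ := hinj
    rcases lt_or_gt_of_ne hne with h | h
    · exact ⟨i, j, h, hj, hw⟩
    · exact ⟨j, i, h, hi, hw.symm⟩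
  refine ih (j - i - 1) (by omega) (fun t => w (i + t)) ?_ fun t ht => ?_
  · simp only [add_zero, show i + (j - i - 1 + 1) = j by omega, hw]
  · simpa only [add_assoc] using hstep (i + t) (by omega)

theorem _root_.IsAcyclicOrientation.not_reflTransGen (hD : IsAcyclicOrientation G D) {a b : V}
    (hab : G.DStep D a b) : ¬ Relation.ReflTransGen (G.DStep D) b a := by
  intro hba
  obtain ⟨n, w, hw0, hwn, hw⟩ := exists_walk_of_reflTransGen hba
  refine hD.false_of_closed_walk n (fun | 0 => a | i + 1 => w i) hwn fun i hi => ?_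
  rcases i with _ | i
  · exact (hw0 ▸ hab : G.DStep D a (w 0))
  · exact hw i (by omega)

theorem _root_.IsAcyclicOrientation.isUpSet_reachSet_diff_singleton (hD : IsAcyclicOrientation G D)
    (v : V) : G.IsUpSet D (G.reachSet D v \ {v}) := by
  rintro oe hoe ⟨hin, hne⟩
  refine ⟨isUpSet_reachSet v oe hoe hin, fun hv => ?_⟩
  exact hD.not_reflTransGen ⟨oe, hoe, rfl, hv⟩ hin

theorem sum_oval_dm_eq_zero_of_cycle (f : V → ℝ) {l : ℕ} (vs : Fin l → V)
    (es : Fin l → E × Bool) (hes : ∀ i : Fin l, G.otail (es i) = vs i ∧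
      G.ohead (es i) = vs ⟨((i : ℕ) + 1) % l, Nat.mod_lt _ i.pos⟩) :
    ∑ i, oval (G.dm f) (es i) = 0 := by
  have hrot : ∀ i : Fin l, (⟨((i : ℕ) + 1) % l, Nat.mod_lt _ i.pos⟩ : Fin l) = finRotate l i :=
    fun i => by rw [finRotate_apply]; ext; simp [Fin.val_add]
  simp only [oval_dm, (hes _).1, (hes _).2, hrot, Finset.sum_sub_distrib]
  rw [Equiv.sum_comp (finRotate l) (fun i => f (vs i)), sub_self]

/-- Around an oriented cycle the increments of `f` sum to `0`, so `f` decreases along some edge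
of the cycle, whose reversal then lies in `D`. -/
theorem isAcyclicOrientation_of_forall_exists_dm (hD : IsOrientation D)
    (hcert : ∀ oe ∈ D, ∃ f : V → ℝ, oe ∈ suppPos (G.dm f) ∧ suppPos (G.dm f) ⊆ D) :
    IsAcyclicOrientation G D := by
  refine ⟨hD, fun ⟨l, vs, es, hl, _, hes⟩ => ?_⟩
  obtain ⟨f, hpos, hfD⟩ := hcert _ (hes ⟨0, hl⟩).1
  have hsum := sum_oval_dm_eq_zero_of_cycle f vs es fun i => (hes i).2
  obtain ⟨j, -, hj⟩ : ∃ j ∈ Finset.univ, oval (G.dm f) (es j) < 0 := by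
    by_contra! h
    exact (Finset.sum_pos' h ⟨_, Finset.mem_univ _, hpos⟩).ne' hsum
  have hflip : ((es j).1, !(es j).2) ∈ D := hfD (by
    simp only [suppPos, Set.mem_ofPred_eq, oval_not]; linarith)
  exact (hD.mem_not_iff _ _).1 hflip (hes j).1

end Acyclicity

section OrientationVertex

variable {V E : Type} {G : Multigraph V E} {D : Set (E × Bool)}

theorem cut_sdiff {s t : Set V} (h : s ⊆ t) : G.cut (t \ s) = G.cut t - G.cut s := by
  rw [cut, Set.indicator_sdiff h]
  exact map_sub G.dmLinear _ _

theorem dm_eq_sum_smul_cut_singleton [Fintype V] (f : V → ℝ) :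
    G.dm f = ∑ v, f v • G.cut {v} := by
  have hf : f = ∑ v, f v • Pi.single v 1 := funext fun u => by
    simp [Finset.sum_apply, Pi.single_apply]
  conv_lhs => rw [hf]
  simp only [cut_singleton_eq_dm_single]
  exact (map_sum G.dmLinear _ _).trans (Finset.sum_congr rfl fun v _ => map_smul G.dmLinear _ _)

theorem exists_bond_mem_suppPos [Fintype V] (hG : G.Conn) (hD : IsAcyclicOrientation G D)
    {oe : E × Bool} (hoe : oe ∈ D) :
    ∃ C, IsBondElt G (G.cut C) ∧ suppPos (G.cut C) ⊆ D ∧ oe ∈ suppPos (G.cut C) := by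
  set A := G.reachSet D (G.ohead oe)
  have hA : oe ∈ suppPos (G.cut A) := by
    have htail : G.otail oe ∉ A := hD.not_reflTransGen ⟨oe, hoe, rfl, rfl⟩
    simp [suppPos, cut, oval_dm, A, mem_reachSet_self, htail]
  obtain ⟨P, hP, hsum⟩ := exists_bond_decomposition hG A
  have hne : (P.map G.cut).sum oe.1 ≠ 0 := by
    rw [hsum]; intro h; simp [suppPos, oval, h] at hA
  obtain ⟨_, hy, hne⟩ := exists_mem_ne_zero_of_sum_apply_ne_zero hne
  obtain ⟨C, hC, rfl⟩ := Multiset.mem_map.1 hy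
  refine ⟨C, (hP C hC).1,
    (hP C hC).2.suppPos_subset.trans (suppPos_cut_subset_of_isUpSet hD.1 (isUpSet_reachSet _)), ?_⟩
  simpa only [suppPos, Set.mem_ofPred_eq, (hP C hC).2.oval_eq hne] using hA

variable [Fintype E]

theorem eq_zero_of_dotProduct_cut_singleton [Fintype V] {z : E → ℝ} (hz : z ∈ FR G)
    (h : ∀ v, z ⬝ᵥ G.cut {v} = 0) : z = 0 := by
  obtain ⟨f, rfl⟩ := hz
  refine dotProduct_self_eq_zero.1 ?_
  conv_lhs => arg 2; rw [dm_eq_sum_smul_cut_singleton]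
  simp [dotProduct_sum, dotProduct_smul, h]

theorem mem_FD_iff {x : E → ℝ} :
    x ∈ FD G D ↔ x ∈ FR G ∧ ∀ C : Set V, IsBondElt G (G.cut C) → suppPos (G.cut C) ⊆ D →
      2 * (x ⬝ᵥ G.cut C) = G.cut C ⬝ᵥ G.cut C := by
  refine and_congr_right fun hx => ⟨fun h C hC hCD => (mem_Fhyp_iff.1 (h _ hC hCD)).2,
    fun h β hβ hβD => ?_⟩
  obtain ⟨C, rfl⟩ := IsBondElt.exists_eq_cut hβ
  exact mem_Fhyp_iff.2 ⟨hx, h C hβ hβD⟩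

theorem isExposed_VorF_zero_inter_FD [Fintype V] (D : Set (E × Bool)) :
    IsExposed ℝ (VorF G 0) (VorF G 0 ∩ FD G D) := by
  convert isExposed_setOf_forall_eq (VorF G 0)
    (Finset.univ.filter fun C : Set V => IsBondElt G (G.cut C) ∧ suppPos (G.cut C) ⊆ D)
    (fun C => twoDot (G.cut C)) (fun C => G.cut C ⬝ᵥ G.cut C)
    (fun x hx C _ => (mem_VorF_zero_iff.1 hx).2 _ (G.cut_mem_FZr C)) using 1
  ext x
  simp only [Set.mem_inter_iff, mem_FD_iff, Set.mem_ofPred_eq, Finset.mem_filter,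
    Finset.mem_univ, true_and, twoDot_apply, and_imp]
  exact ⟨fun ⟨hV, _, h⟩ => ⟨hV, h⟩, fun ⟨hV, h⟩ => ⟨hV, (mem_VorF_zero_iff.1 hV).1, h⟩⟩

theorem dotProduct_cut_eq_of_mem_FD [Fintype V] (hG : G.Conn) (hD : IsOrientation D)
    {x y : E → ℝ} (hx : x ∈ FD G D) (hy : y ∈ FD G D) {A : Set V} (hA : G.IsUpSet D A) :
    x ⬝ᵥ G.cut A = y ⬝ᵥ G.cut A := by
  obtain ⟨P, hP, hsum⟩ := exists_bond_decomposition hG A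
  have htight : ∀ C ∈ P, x ⬝ᵥ G.cut C = y ⬝ᵥ G.cut C := fun C hC => by
    have hCD := (hP C hC).2.suppPos_subset.trans (suppPos_cut_subset_of_isUpSet hD hA)
    have := (mem_FD_iff.1 hx).2 C (hP C hC).1 hCD
    have := (mem_FD_iff.1 hy).2 C (hP C hC).1 hCD
    linarith
  rw [← hsum, dotProduct_multiset_sum, dotProduct_multiset_sum, Multiset.map_map,
    Multiset.map_map]
  exact congrArg Multiset.sum (Multiset.map_congr rfl htight)

/-- The cuts of the up-sets of `D` span `F_ℝ`, since `χ_v = χ_{R(v)} - χ_{R(v) ∖ v}` for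
`R(v) = G.reachSet D v`. -/
theorem eq_of_mem_FD [Fintype V] (hG : G.Conn) (hD : IsAcyclicOrientation G D) {x y : E → ℝ}
    (hx : x ∈ FD G D) (hy : y ∈ FD G D) : x = y := by
  refine sub_eq_zero.1 (eq_zero_of_dotProduct_cut_singleton
    (G.cutSpace.sub_mem (mem_FD_iff.1 hx).1 (mem_FD_iff.1 hy).1) fun v => ?_)
  have hv : G.cut {v} = G.cut (G.reachSet D v) - G.cut (G.reachSet D v \ {v}) := by
    rw [cut_sdiff (Set.singleton_subset_iff.2 (mem_reachSet_self v)), sub_sub_cancel]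
  rw [sub_dotProduct, hv, dotProduct_sub, dotProduct_sub,
    dotProduct_cut_eq_of_mem_FD hG hD.1 hx hy (isUpSet_reachSet v),
    dotProduct_cut_eq_of_mem_FD hG hD.1 hx hy (hD.isUpSet_reachSet_diff_singleton v), sub_self]

section Projection

variable {ν : E → ℝ} (hν : ν ∈ FR G)
  (hproj : ∀ y ∈ FR G, 2 * (ν ⬝ᵥ y) = orientationVec D ⬝ᵥ y)
include hproj

theorem two_dotProduct_cut_eq_iff_of_proj (hD : IsOrientation D) (C : Set V) :
    2 * (ν ⬝ᵥ G.cut C) = G.cut C ⬝ᵥ G.cut C ↔ suppPos (G.cut C) ⊆ D := by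
  rw [hproj _ (G.cut_mem_FR C)]
  exact orientationVec_dotProduct_cut_eq_iff hD C

include hν

theorem mem_FD_of_proj (hD : IsOrientation D) : ν ∈ FD G D :=
  mem_FD_iff.2 ⟨hν, fun C _ hC => (two_dotProduct_cut_eq_iff_of_proj hproj hD C).2 hC⟩

theorem mem_VorF_zero_of_proj [Fintype V] (hG : G.Conn) : ν ∈ VorF G 0 := by
  refine mem_VorF_zero_of_bond_ineqs hG hν fun β hβ => ?_
  obtain ⟨C, rfl⟩ := IsBondElt.exists_eq_cut hβ
  rw [hproj _ (G.cut_mem_FR C)]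
  exact orientationVec_dotProduct_cut_le D C

end Projection

theorem exists_FD_eq_singleton [Fintype V] (hG : G.Conn) (hD : IsAcyclicOrientation G D) :
    ∃ ν : E → ℝ, FD G D = {ν} ∧ ν ∈ VorF G 0 ∧ IsExposed ℝ (VorF G 0) {ν} ∧
      D = {oe : E × Bool | ∃ β : E → ℝ, IsBondElt G β ∧ ν ∈ Fhyp G β ∧ oe ∈ suppPos β} := by
  -- `ν^D` is the orthogonal projection of `𝟙_D / 2` to `F_ℝ`
  obtain ⟨ν, hν, hν'⟩ :=
    exists_mem_forall_dotProduct_eq G.cutSpace ((1 / 2 : ℝ) • orientationVec D)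
  have hproj : ∀ y ∈ FR G, 2 * (ν ⬝ᵥ y) = orientationVec D ⬝ᵥ y := fun y hy => by
    rw [hν' y hy, smul_dotProduct, smul_eq_mul]; ring
  have hνD := mem_FD_of_proj hν hproj hD.1
  have hFD : FD G D = {ν} := Set.eq_singleton_iff_unique_mem.2
    ⟨hνD, fun x hx => eq_of_mem_FD hG hD hx hνD⟩
  have hVor := mem_VorF_zero_of_proj hν hproj hG
  refine ⟨ν, hFD, hVor, ?_, Set.ext fun oe => ⟨fun hoe => ?_, ?_⟩⟩
  · simpa [hFD, hVor] using isExposed_VorF_zero_inter_FD (G := G) D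
  · obtain ⟨C, hC, hCD, hoeC⟩ := exists_bond_mem_suppPos hG hD hoe
    exact ⟨_, hC,
      mem_Fhyp_iff.2 ⟨hν, (two_dotProduct_cut_eq_iff_of_proj hproj hD.1 C).2 hCD⟩, hoeC⟩
  · rintro ⟨β, hβ, hνβ, hoe⟩
    obtain ⟨C, rfl⟩ := IsBondElt.exists_eq_cut hβ
    exact (two_dotProduct_cut_eq_iff_of_proj hproj hD.1 C).1 (mem_Fhyp_iff.1 hνβ).2 hoe

end OrientationVertex

section ExposedVertex

variable {V E : Type} {G : Multigraph V E} [Fintype E]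

theorem cut_union_inter_dotProduct_self_add_two_le (C C' : Set V) {e : E} (he : G.cut C e = 1)
    (he' : G.cut C' e = -1) :
    G.cut (C ∪ C') ⬝ᵥ G.cut (C ∪ C') + G.cut (C ∩ C') ⬝ᵥ G.cut (C ∩ C') + 2 ≤
      G.cut C ⬝ᵥ G.cut C + G.cut C' ⬝ᵥ G.cut C' := by
  set d : E → ℝ := fun e => G.cut C e * G.cut C e + G.cut C' e * G.cut C' e -
    (G.cut (C ∪ C') e * G.cut (C ∪ C') e + G.cut (C ∩ C') e * G.cut (C ∩ C') e)
  have hd : ∀ e, 0 ≤ d e := fun e => by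
    simp only [d, cut_apply, Set.indicator_apply, Set.mem_union, Set.mem_inter_iff, Pi.one_apply]
    split_ifs <;> simp_all
  have hde : 2 ≤ d e := by
    obtain ⟨hh, ht⟩ := (G.cut_apply_eq_one_iff C e).1 he
    obtain ⟨hh', ht'⟩ := (G.cut_apply_eq_neg_one_iff C' e).1 he'
    norm_num [d, cut_apply, Set.indicator_apply, hh, ht, hh', ht']
  have := hde.trans (Finset.single_le_sum (fun e _ => hd e) (Finset.mem_univ e))
  simp only [d, Finset.sum_sub_distrib, Finset.sum_add_distrib] at this
  simp only [dotProduct]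
  linarith

/-- By strict submodularity of `C ↦ ‖d(χ_C)‖²`, the inequality for `C ∪ C'` or for `C ∩ C'`
would fail. -/
theorem false_of_tight_of_cut_apply {ν : E → ℝ} (hν : ν ∈ VorF G 0) {C C' : Set V}
    (hC : 2 * (ν ⬝ᵥ G.cut C) = G.cut C ⬝ᵥ G.cut C)
    (hC' : 2 * (ν ⬝ᵥ G.cut C') = G.cut C' ⬝ᵥ G.cut C') {e : E} (he : G.cut C e = 1)
    (he' : G.cut C' e = -1) : False := by
  have hU := (mem_VorF_zero_iff.1 hν).2 _ (G.cut_mem_FZr (C ∪ C'))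
  have hI := (mem_VorF_zero_iff.1 hν).2 _ (G.cut_mem_FZr (C ∩ C'))
  have hadd := congrArg (ν ⬝ᵥ ·) (G.cut_add_cut C C')
  simp only [dotProduct_add] at hadd
  linarith [cut_union_inter_dotProduct_self_add_two_le C C' he he']

theorem exists_mem_cut_apply_ne_zero {S : Set (Set V)}
    (hS : ∀ z ∈ FR G, (∀ C ∈ S, z ⬝ᵥ G.cut C = 0) → z = 0) (e : E) :
    ∃ C ∈ S, G.cut C e ≠ 0 := by
  obtain ⟨p, hp, hpe⟩ := exists_mem_forall_dotProduct_eq G.cutSpace (Pi.single e 1)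
  have hpe' : ∀ C, p ⬝ᵥ G.cut C = G.cut C e := fun C => by
    rw [hpe _ (G.cut_mem_FR C), single_one_dotProduct]
  by_contra! h
  have := hS p hp fun C hC => (hpe' C).trans (h C hC)
  have := hpe' {G.head e}
  simp_all [cut_singleton_head]

theorem exists_isAcyclicOrientation_FD_eq [Fintype V] (hG : G.Conn) {ν : E → ℝ}
    (hν : ν ∈ VorF G 0) (hexp : IsExposed ℝ (VorF G 0) {ν}) :
    ∃ D : Set (E × Bool), IsAcyclicOrientation G D ∧ FD G D = {ν} := by
  set S := {C : Set V | IsBondElt G (G.cut C) ∧ 2 * (ν ⬝ᵥ G.cut C) = G.cut C ⬝ᵥ G.cut C}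
  have hS : ∀ z ∈ FR G, (∀ C ∈ S, z ⬝ᵥ G.cut C = 0) → z = 0 := by
    rw [VorF_zero_eq hG] at hν hexp
    refine fun z hz h => eq_zero_of_isExposed_singleton G.cutSpace _ _ hν hexp hz fun C hC => ?_
    simp [h C ⟨C.2, by simpa using hC⟩]
  set D := {oe : E × Bool | ∃ C ∈ S, oe ∈ suppPos (G.cut C)}
  have hD : IsOrientation D := by
    intro e
    obtain ⟨C, hC, hCe⟩ := exists_mem_cut_apply_ne_zero hS e
    refine ⟨fun ⟨C₁, hC₁, h₁⟩ ⟨C₂, hC₂, h₂⟩ => ?_, fun hf => ?_⟩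
    · simp only [suppPos, oval, Set.mem_ofPred_eq, if_true, Bool.false_eq_true, if_false] at h₁ h₂
      exact false_of_tight_of_cut_apply hν hC₁.2 hC₂.2 (G.cut_apply_eq_one_of_pos h₁)
        (G.cut_apply_eq_neg_one_of_neg (by linarith))
    · rcases (G.cut_apply_trichotomy C e).resolve_left hCe with h | h
      · exact ⟨C, hC, by simp [suppPos, oval, h]⟩
      · exact absurd ⟨C, hC, by simp [suppPos, oval, h]⟩ hf
  have hacyc : IsAcyclicOrientation G D := isAcyclicOrientation_of_forall_exists_dm hD
    fun oe ⟨C, hC, hoe⟩ => ⟨_, hoe, fun oe' h => ⟨C, hC, h⟩⟩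
  obtain ⟨ν', hFD, -⟩ := exists_FD_eq_singleton hG hacyc
  refine ⟨D, hacyc, hFD.trans (congrArg _ (sub_eq_zero.1 (hS _ ?_ fun C hC => ?_)))⟩
  · exact G.cutSpace.sub_mem (mem_FD_iff.1 (hFD ▸ rfl : ν' ∈ FD G D)).1
      (mem_VorF_zero_iff.1 hν).1
  · have := (mem_FD_iff.1 (hFD ▸ rfl : ν' ∈ FD G D)).2 C hC.1 fun oe h => ⟨C, hC, h⟩
    rw [sub_dotProduct]
    linarith [hC.2]

end ExposedVertex

end Multigraph

/-- for an acyclic orientation `D` of `G`, the set `F_D` is a single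
point `ν^D`, which is a vertex (`0`-dimensional face) of `Vor_F(O)` and satisfies
`φ(ν^D) = D`, i.e. `𝔼(D)` is the union of the positive supports of the bond elements
`β` with `ν^D ∈ F_β`; moreover every vertex of `Vor_F(O)` arises this way. -/
theorem stmt17 (G : Multigraph V E) (hG : G.Conn) :
    (∀ D : Set (E × Bool), IsAcyclicOrientation G D →
      ∃ ν : E → ℝ, FD G D = {ν} ∧ ν ∈ VorF G 0 ∧ IsExposed ℝ (VorF G 0) {ν} ∧
        D = {oe : E × Bool | ∃ β : E → ℝ, IsBondElt G β ∧ ν ∈ Fhyp G β ∧ oe ∈ suppPos β}) ∧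
    (∀ ν : E → ℝ, ν ∈ VorF G 0 → IsExposed ℝ (VorF G 0) {ν} →
      ∃ D : Set (E × Bool), IsAcyclicOrientation G D ∧ FD G D = {ν}) :=
  ⟨fun _ hD => Multigraph.exists_FD_eq_singleton hG hD,
    fun _ hν hexp => Multigraph.exists_isAcyclicOrientation_FD_eq hG hν hexp⟩
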